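/- arXiv:1901.01169 — 3 statements merged into one kernel-verified Lean document; each statement's English description precedes it below -/
import Mathlib

section
/- Let ν_t and ν̂_t be two families of sub-probability measures on (0,∞) solving the same forward equation ∂_t ν_t(Γ) = ∫ λ(t,ŝ)μ_t(ŝ,Γ) ν_t(dŝ) − ∫_Γ λ(t,ŝ) ν_t(dŝ) with the same initial measure ν, where ν_t is the minimal nonnegative solution. If ν_t((0,∞)) = 1 for all t (conservativity) and ν̂_t((0,∞)) ≤ 1, then ν̂_t(Γ) = ν_t(Γ) for every Borel set Γ and every t ≥ 0. -/
open MeasureTheory Set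

theorem MeasureTheory.Measure.eq_of_le_of_measure_le {α : Type*} [MeasurableSpace α]
    {μ ν : Measure α} {S : Set α}
    (hle : ∀ Γ, MeasurableSet Γ → Γ ⊆ S → μ Γ ≤ ν Γ) (hS : MeasurableSet S)
    (hmass : ν S ≤ μ S) (hfin : μ S ≠ ⊤) (Γ : Set α) (hΓ : MeasurableSet Γ) (hΓS : Γ ⊆ S) :
    ν Γ = μ Γ := by
  have hsplit : ∀ ρ : Measure α, ρ Γ + ρ (S \ Γ) = ρ S := fun ρ => by
    rw [← measure_union' disjoint_sdiff_right hΓ, union_sdiff_cancel hΓS]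
  have hfin' : μ (S \ Γ) ≠ ⊤ := ne_top_of_le_ne_top hfin (measure_mono sdiff_subset)
  refine le_antisymm ?_ (hle Γ hΓ hΓS)
  refine (ENNReal.add_le_add_iff_right hfin').mp ?_
  calc ν Γ + μ (S \ Γ) ≤ ν Γ + ν (S \ Γ) :=
      add_le_add_right (hle _ (hS.diff hΓ) sdiff_subset) _
    _ = ν S := hsplit ν
    _ ≤ μ S := hmass
    _ = μ Γ + μ (S \ Γ) := (hsplit μ).symm

theorem minimal_conservative_solution_unique_general
    (ν nuh : ℝ → Measure ℝ)
    (hmin : ∀ t, 0 ≤ t → ∀ Γ : Set ℝ, MeasurableSet Γ → Γ ⊆ Ioi 0 →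
      ν t Γ ≤ nuh t Γ)
    (hcons : ∀ t, 0 ≤ t → ν t (Ioi 0) = 1)
    (hsub : ∀ t, 0 ≤ t → nuh t (Ioi 0) ≤ 1) :
    ∀ t, 0 ≤ t → ∀ Γ : Set ℝ, MeasurableSet Γ → Γ ⊆ Ioi 0 →
      nuh t Γ = ν t Γ := fun t ht =>
  Measure.eq_of_le_of_measure_le (hmin t ht) measurableSet_Ioi
    ((hsub t ht).trans (hcons t ht).ge) (by simp [hcons t ht])

/-- Uniqueness via minimality and conservativity: if `ν t` is the minimal
nonnegative solution of the forward equation (so `ν t Γ ≤ nuh t Γ` for any other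
nonnegative solution `nuh` with the same initial measure), `ν t` is conservative
(`ν t ((0,∞)) = 1`) and `nuh t` is a sub-probability measure on `(0,∞)`
(`nuh t ((0,∞)) ≤ 1`), then `nuh t Γ = ν t Γ` for every Borel `Γ ⊆ (0,∞)`. -/
theorem minimal_conservative_solution_unique
    (ν nuh : ℝ → Measure ℝ)
    (hsupp : ∀ t, ν t (Ioi 0)ᶜ = 0) (hsupp' : ∀ t, nuh t (Ioi 0)ᶜ = 0)
    (hinit : ν 0 = nuh 0)
    (hmin : ∀ t, 0 ≤ t → ∀ Γ : Set ℝ, MeasurableSet Γ → Γ ⊆ Ioi 0 →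
      ν t Γ ≤ nuh t Γ)
    (hcons : ∀ t, 0 ≤ t → ν t (Ioi 0) = 1)
    (hsub : ∀ t, 0 ≤ t → nuh t (Ioi 0) ≤ 1) :
    ∀ t, 0 ≤ t → ∀ Γ : Set ℝ, MeasurableSet Γ → Γ ⊆ Ioi 0 →
      nuh t Γ = ν t Γ :=
  minimal_conservative_solution_unique_general ν nuh hmin hcons hsub
end

section
/- The stationary solution of Niwa's flux equation: the probability flux J(x) = −(p̃/2)(x − x̄)ρ(x) − d/dx[D·exp(x/x̄)·ρ(x)] vanishes identically on (0,∞) when ρ(x) = (1/Z)·exp[−(x/x̄)(1 − γ·e^{−x/x̄})] with γ = p̃·x̄²/(2D). -/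
open Real

/-
The density is `ρ = (1/Z) e^φ` with `φ(x) = -(x/x̄)(1 - γ e^{-x/x̄})`, so
`(D e^{x/x̄} ρ)' = D e^{x/x̄} ρ (1/x̄ + φ')`. Since `1/x̄ + φ'(x) = γ e^{-x/x̄} (x̄ - x)/x̄²`, the
exponentials cancel and the diffusive term equals `(Dγ/x̄²)(x̄ - x) ρ = (p̃/2)(x̄ - x) ρ`, which is
exactly minus the drift term.
-/

noncomputable def niwaDensity (xbar γ Z x : ℝ) : ℝ :=
  1 / Z * exp (-(x / xbar) * (1 - γ * exp (-x / xbar)))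

theorem hasDerivAt_niwaExponent {xbar : ℝ} (hxbar : xbar ≠ 0) (γ x : ℝ) :
    HasDerivAt (fun y => -(y / xbar) * (1 - γ * exp (-y / xbar)))
      (-(1 / xbar) + γ * exp (-x / xbar) * (xbar - x) / xbar ^ 2) x := by
  have hlin : HasDerivAt (fun y => -(y / xbar)) (-(1 / xbar)) x :=
    ((hasDerivAt_id x).div_const xbar).neg
  have hdecay : HasDerivAt (fun y => 1 - γ * exp (-y / xbar))
      (-(γ * (exp (-x / xbar) * (-(1 / xbar))))) x := by
    simpa only [neg_div] using ((hlin.exp).const_mul γ).const_sub 1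
  refine (hlin.mul hdecay).congr_deriv ?_
  field_simp
  ring

theorem hasDerivAt_mul_exp_niwaDensity {xbar : ℝ} (hxbar : xbar ≠ 0) (D γ Z x : ℝ) :
    HasDerivAt (fun y => D * exp (y / xbar) * niwaDensity xbar γ Z y)
      (D * γ * (xbar - x) / xbar ^ 2 * niwaDensity xbar γ Z x) x := by
  have hgrowth : HasDerivAt (fun y => exp (y / xbar)) (exp (x / xbar) * (1 / xbar)) x := by
    simpa only [id] using ((hasDerivAt_id x).div_const xbar).exp
  have hdensity := ((hasDerivAt_niwaExponent hxbar γ x).exp).const_mul (1 / Z)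
  refine ((hgrowth.const_mul D).mul hdensity).congr_deriv ?_
  have hcancel : exp (x / xbar) * exp (-x / xbar) = 1 := by
    rw [← exp_add, neg_div, add_neg_cancel, exp_zero]
  unfold niwaDensity
  generalize exp (-(x / xbar) * (1 - γ * exp (-x / xbar))) = ρ
  generalize exp (x / xbar) = A at hcancel ⊢
  generalize exp (-x / xbar) = B at hcancel ⊢
  field_simp
  linear_combination ρ * D * γ * (xbar - x) / Z * hcancel

theorem niwa_zero_flux_general (pt xbar D Z : ℝ) (hxb : 0 < xbar)
    (hD : 0 < D) :
    ∀ x : ℝ, 0 < x →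
      -(pt / 2) * (x - xbar) *
          ((1 / Z) * exp (-(x / xbar) * (1 - (pt * xbar ^ 2 / (2 * D)) * exp (-x / xbar)))) -
        deriv (fun y : ℝ =>
          D * exp (y / xbar) *
            ((1 / Z) * exp (-(y / xbar) * (1 - (pt * xbar ^ 2 / (2 * D)) * exp (-y / xbar))))) x
        = 0 := by
  intro x _
  have hflux := (hasDerivAt_mul_exp_niwaDensity hxb.ne' D (pt * xbar ^ 2 / (2 * D)) Z x).deriv
  unfold niwaDensity at hflux
  rw [hflux]
  field_simp
  ring

/-- The probability flux `J(x) = −(pt/2)(x−xbar)ρ(x) − d/dx[D e^{x/xbar} ρ(x)]`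
vanishes identically on `(0,∞)` for the stationary density
`ρ(x) = (1/Z) exp[−(x/xbar)(1 − γ e^{−x/xbar})]` with `γ = pt xbar²/(2D)`. -/
theorem niwa_zero_flux (pt xbar D Z : ℝ) (hp : 0 < pt) (hxb : 0 < xbar)
    (hD : 0 < D) (hZ : 0 < Z) :
    ∀ x : ℝ, 0 < x →
      -(pt / 2) * (x - xbar) *
          ((1 / Z) * exp (-(x / xbar) * (1 - (pt * xbar ^ 2 / (2 * D)) * exp (-x / xbar)))) -
        deriv (fun y : ℝ =>
          D * exp (y / xbar) *
            ((1 / Z) * exp (-(y / xbar) * (1 - (pt * xbar ^ 2 / (2 * D)) * exp (-y / xbar))))) x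
        = 0 :=
  niwa_zero_flux_general pt xbar D Z hxb hD
end

section
/- The gamma density ρ(x) = β^α x^{α−1} e^{−βx}/Γ(α) with α = r/σ² − 1 and β = r/(σ²k) is a zero-flux stationary solution of the Fokker-Planck equation for the stochastic logistic SDE: d/dx(σ²x²ρ(x)) − r·x·(1 − x/k)·ρ(x) = 0 for all x > 0, provided r > σ² > 0 and k > 0. -/
/-! Up to a constant, `σ²x²ρ(x)` is `x^{α+1} e^{−βx}`, whose logarithmic derivative is
`(α + 1)/x − β`. The choice of parameters gives `σ²(α + 1) = r` and `σ²β = r/k`, which turns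
this into the logistic drift `r (1 − x/k)/x`. -/

open Real

theorem hasDerivAt_sq_mul_rpow_mul_exp_neg_mul (a b : ℝ) {x : ℝ} (hx : 0 < x) :
    HasDerivAt (fun y => y ^ 2 * (y ^ (a - 1) * exp (-b * y)))
      ((a + 1 - b * x) * x * (x ^ (a - 1) * exp (-b * x))) x := by
  have hpow : HasDerivAt (fun y => y ^ (a - 1)) ((a - 1) * x ^ (a - 1 - 1)) x :=
    hasDerivAt_rpow_const (Or.inl hx.ne')
  have hexp : HasDerivAt (fun y => exp (-b * y)) (exp (-b * x) * (-b * 1)) x :=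
    ((hasDerivAt_id x).const_mul (-b)).exp
  refine ((hasDerivAt_pow 2 x).mul (hpow.mul hexp)).congr_deriv ?_
  simp only [Pi.mul_apply, rpow_sub_one hx.ne']
  field_simp
  ring

theorem stochastic_logistic_gamma_stationary_general
    (r σ k : ℝ) (hσ : 0 < σ)
    (α β : ℝ) (hα : α = r / σ ^ 2 - 1) (hβ : β = r / (σ ^ 2 * k))
    (ρ : ℝ → ℝ)
    (hρ : ρ = fun x => β ^ α * x ^ (α - 1) * exp (-β * x) / Real.Gamma α) :
    ∀ x : ℝ, 0 < x →
      deriv (fun y => σ ^ 2 * y ^ 2 * ρ y) x =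
        r * x * (1 - x / k) * ρ x := by
  intro x hx
  set c := σ ^ 2 * β ^ α / Gamma α
  have hflux : (fun y => σ ^ 2 * y ^ 2 * ρ y) =
      fun y => c * (y ^ 2 * (y ^ (α - 1) * exp (-β * y))) := by
    funext y
    rw [hρ]
    ring
  have hdrift : σ ^ 2 * (α + 1) = r := by
    rw [hα]
    field_simp
    ring
  have hdamping : σ ^ 2 * β = r / k := by
    rw [hβ]
    field_simp
  rw [hflux, ((hasDerivAt_sq_mul_rpow_mul_exp_neg_mul α β hx).const_mul c).deriv, hρ]
  linear_combination (x * (x ^ (α - 1) * exp (-β * x)) * β ^ α / Gamma α) * hdrift -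
    (x ^ 2 * (x ^ (α - 1) * exp (-β * x)) * β ^ α / Gamma α) * hdamping

/-- The gamma density `ρ(x) = β^α x^{α−1} e^{−βx}/Γ(α)` with
`α = r/σ² − 1` and `β = r/(σ²k)` is a zero-flux stationary solution of the
Fokker–Planck equation of the stochastic logistic SDE:
`(σ²x²ρ)'(x) = r x (1 − x/k) ρ(x)` for all `x > 0`. -/
theorem stochastic_logistic_gamma_stationary
    (r σ k : ℝ) (hσ : 0 < σ) (hk : 0 < k) (hr : σ ^ 2 < r)
    (α β : ℝ) (hα : α = r / σ ^ 2 - 1) (hβ : β = r / (σ ^ 2 * k))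
    (ρ : ℝ → ℝ)
    (hρ : ρ = fun x => β ^ α * x ^ (α - 1) * exp (-β * x) / Real.Gamma α) :
    ∀ x : ℝ, 0 < x →
      deriv (fun y => σ ^ 2 * y ^ 2 * ρ y) x =
        r * x * (1 - x / k) * ρ x :=
  stochastic_logistic_gamma_stationary_general r σ k hσ α β hα hβ ρ hρ
end
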